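/- arXiv:2001.00304 — 5 statements merged into one kernel-verified Lean document; each statement's English description precedes it below -/
import Mathlib

section
/- In any monoid containing elements s_1, …, s_{n−1} satisfying the braid relations, for all 1 ≤ k ≤ r < n one has ν_r^{k,n} = [n;r][n−1;r−1]⋯[n−r+k;k]; that is, the two products [k;r+1][k+1;r+2]⋯[k+n−r−1;n] and [n;r][n−1;r−1]⋯[n−r+k;k] are equal. -/
namespace BraidMonoid

variable {M : Type*} [Monoid M]

/-- `br g a b` is the element `[a;b]` of the paper: for `a ≤ b` it is the descending
product `g (b-1) * g (b-2) * ⋯ * g a`, for `b < a` it is the ascending product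
`g b * g (b+1) * ⋯ * g (a-1)`, and `br g a a = 1`. -/
def br (g : ℕ → M) (a b : ℕ) : M :=
  if a ≤ b then (((List.range (b - a)).map (fun j => g (a + j))).reverse).prod
  else ((List.range (a - b)).map (fun j => g (b + j))).prod

/-- `nu g r K N` is `ν_r^{K,N} = [K;r+1][K+1;r+2]⋯[K+N-r-1;N]`. -/
def nu (g : ℕ → M) (r K N : ℕ) : M :=
  ((List.range (N - r)).map (fun j => br g (K + j) (r + 1 + j))).prod

/-- The braid relations for the elements `g 1, …, g (n-1)`. -/
def BraidRels (g : ℕ → M) (n : ℕ) : Prop :=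
  (∀ i, 1 ≤ i → i + 1 ≤ n - 1 → g i * g (i + 1) * g i = g (i + 1) * g i * g (i + 1)) ∧
  (∀ i j, 1 ≤ i → j ≤ n - 1 → i + 1 < j → g i * g j = g j * g i)

/-- `π` is an `r`-shuffle: it is strictly increasing on the first `r` positions and on
the remaining positions (0-indexed). -/
def IsShuffle (n r : ℕ) (π : Equiv.Perm (Fin n)) : Prop :=
  (∀ i j : Fin n, i < j → (j : ℕ) < r → π i < π j) ∧
  (∀ i j : Fin n, i < j → r ≤ (i : ℕ) → π i < π j)

/-- `[π]_{(t)} = [t+1; t+π(1)] [t+2; t+π(2)] ⋯ [t+r; t+π(r)]` (1-indexed; here `π` is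
0-indexed, so position `i` contributes `[t+i+1; t+π(i)+1]`). -/
def brShuffleShift (g : ℕ → M) (t N r : ℕ) (π : Equiv.Perm (Fin N)) : M :=
  (((List.finRange N).take r).map (fun (i : Fin N) => br g (t + (i : ℕ) + 1) (t + (π i : ℕ) + 1))).prod

/-- `[π] = [1;π(1)][2;π(2)]⋯[r;π(r)]`. -/
def brShuffle (g : ℕ → M) (N r : ℕ) (π : Equiv.Perm (Fin N)) : M :=
  brShuffleShift g 0 N r π

end BraidMonoid


/-!
Both sides are products over the grid of generators `g (K + i + j)` with `i ≤ r - K` and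
`j < n - r`: `ν` reads it column by column (each `[K+j; r+1+j]` is a descending column), the
right-hand side row by row (each `[n-j; r-j]` is an ascending row). Appending one column to a
stack of rows only moves each new generator to the left past rows whose generators have indices
at least two smaller, so the far commutation relations alone turn one reading into the other.
-/

namespace BraidMonoid

section Grid

variable {M : Type*} [Monoid M] (g : ℕ → M)

def asc (a len : ℕ) : M :=
  ((List.range len).map fun j => g (a + j)).prod

def desc (a len : ℕ) : M :=
  ((List.range len).map fun j => g (a + j)).reverse.prod

/-- `ascStack g K m e = asc g (K + e - 1) m * ⋯ * asc g (K + 1) m * asc g K m`. -/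
def ascStack (K m e : ℕ) : M :=
  ((List.range e).map fun i => asc g (K + i) m).reverse.prod

def FarCommute (n : ℕ) : Prop :=
  ∀ i j, 1 ≤ i → i + 1 < j → j < n → Commute (g i) (g j)

variable {g}

theorem BraidRels.farCommute {n : ℕ} (hg : BraidRels g n) : FarCommute g n :=
  fun i j hi hij hjn => hg.2 i j hi (by omega) hij

variable (g)

theorem asc_succ (a len : ℕ) : asc g a (len + 1) = asc g a len * g (a + len) := by
  simp [asc, List.range_succ]

theorem desc_succ (a len : ℕ) : desc g a (len + 1) = g (a + len) * desc g a len := by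
  simp [desc, List.range_succ]

theorem ascStack_succ (K m e : ℕ) :
    ascStack g K m (e + 1) = asc g (K + e) m * ascStack g K m e := by
  simp [ascStack, List.range_succ]

theorem br_self_add (a len : ℕ) : br g a (a + len) = desc g a len := by
  simp [br, desc]

theorem br_add_self (a len : ℕ) : br g (a + len) a = asc g a len := by
  cases len with
  | zero => simp [br, asc]
  | succ len => simp [br, asc]

variable {g}

theorem FarCommute.commute_asc {n : ℕ} (hg : FarCommute g n) {a len t : ℕ} (ha : 1 ≤ a)
    (hat : a + len < t) (ht : t < n) : Commute (g t) (asc g a len) := by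
  refine Commute.list_prod_right _ _ fun x hx => ?_
  obtain ⟨j, hj, rfl⟩ := List.mem_map.mp hx
  have := List.mem_range.mp hj
  exact (hg (a + j) t (by omega) (by omega) ht).symm

theorem FarCommute.commute_ascStack {n : ℕ} (hg : FarCommute g n) {K m e : ℕ} (hK : 1 ≤ K)
    (hn : K + e + m < n) : Commute (g (K + m + e)) (ascStack g K m e) := by
  refine Commute.list_prod_right _ _ fun x hx => ?_
  obtain ⟨i, hi, rfl⟩ := List.mem_map.mp (List.mem_reverse.mp hx)
  have := List.mem_range.mp hi
  exact hg.commute_asc (by omega) (by omega) (by omega)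

theorem FarCommute.ascStack_mul_desc {n : ℕ} (hg : FarCommute g n) {K m : ℕ} (hK : 1 ≤ K) :
    ∀ e, K + e + m ≤ n → ascStack g K m e * desc g (K + m) e = ascStack g K (m + 1) e
  | 0, _ => by simp [ascStack, desc]
  | e + 1, hn => by
    have hcomm := hg.commute_ascStack hK (e := e) (m := m) (by omega)
    calc ascStack g K m (e + 1) * desc g (K + m) (e + 1)
        = asc g (K + e) m * g (K + m + e) * (ascStack g K m e * desc g (K + m) e) := by
          simp only [ascStack_succ, desc_succ, mul_assoc, hcomm.left_comm]
      _ = ascStack g K (m + 1) (e + 1) := by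
          rw [hg.ascStack_mul_desc hK e (by omega), ascStack_succ, asc_succ, add_right_comm]

theorem FarCommute.prod_desc_eq_ascStack {n : ℕ} (hg : FarCommute g n) {K e : ℕ}
    (hK : 1 ≤ K) :
    ∀ m, K + e + m ≤ n + 1 →
      ((List.range m).map fun j => desc g (K + j) e).prod = ascStack g K m e
  | 0, _ => by simp [ascStack, asc]
  | m + 1, hn => by
    rw [List.prod_range_succ, hg.prod_desc_eq_ascStack hK m (by omega),
      hg.ascStack_mul_desc hK e (by omega)]

variable (g)

theorem nu_eq_prod_desc {K r : ℕ} (hKr : K ≤ r) (m : ℕ) :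
    nu g r K (r + m) = ((List.range m).map fun j => desc g (K + j) (r - K + 1)).prod := by
  rw [nu, Nat.add_sub_cancel_left]
  congr 1
  refine List.map_congr_left fun j _ => ?_
  rw [show r + 1 + j = K + j + (r - K + 1) by omega, br_self_add]

theorem prod_br_eq_ascStack {K r : ℕ} (hKr : K ≤ r) (m : ℕ) :
    ((List.range (r - K + 1)).map fun j => br g (r + m - j) (r - j)).prod
      = ascStack g K m (r - K + 1) := by
  have hrev : (List.range (r - K + 1)).reverse = (List.range (r - K + 1)).map (r - K - ·) := by
    simpa [← List.range_eq_range'] using List.reverse_range' (s := 0) (n := r - K + 1)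
  rw [ascStack, ← List.map_reverse, hrev, List.map_map]
  congr 1
  refine List.map_congr_left fun j hj => ?_
  have hj := List.mem_range.mp hj
  rw [Function.comp_apply, show r + m - j = r - j + m by omega, br_add_self]
  congr 1
  omega

end Grid

end BraidMonoid

open BraidMonoid in
/-- relation (2.7): in a monoid whose elements `g 1, …, g (n-1)` satisfy the
braid relations, for `1 ≤ K ≤ r < n` one has
`ν_r^{K,n} = [n;r][n-1;r-1]⋯[n-r+K;K]`. -/
theorem stmt2 {M : Type*} [Monoid M] (n : ℕ) (g : ℕ → M) (hg : BraidRels g n)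
    (K r : ℕ) (h1 : 1 ≤ K) (h2 : K ≤ r) (h3 : r < n) :
    nu g r K n = ((List.range (r - K + 1)).map (fun j => br g (n - j) (r - j))).prod := by
  obtain ⟨m, rfl⟩ : ∃ m, n = r + m := ⟨n - r, by omega⟩
  rw [nu_eq_prod_desc g h2, hg.farCommute.prod_desc_eq_ascStack h1 m (by omega),
    prod_br_eq_ascStack g h2]
end

section
/- In any monoid containing elements s_1, …, s_{n−1} satisfying the braid relations: (i) for all 1 ≤ t ≤ r < m < n one has ν_r^{t,m} ν_m^{m−r+t,n} = ν_r^{t,n}; and (ii) for all 1 ≤ t ≤ s < r < n one has ν_r^{s+1,n} ν_s^{t,n−r+s} = ν_r^{t,n}. -/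
open BraidMonoid

namespace Stmt3Aux

variable {M : Type*} [Monoid M] (g : ℕ → M)

lemma br_concat (a b c : ℕ) (hab : a ≤ b) (hbc : b ≤ c) :
    br g b c * br g a b = br g a c := by
  unfold br
  rw [if_pos hab, if_pos hbc, if_pos (hab.trans hbc)]
  rw [show c - a = (b - a) + (c - b) from by omega, List.range_add, List.map_append,
    List.reverse_append, List.prod_append]
  congr 2
  rw [List.map_map]
  congr 1
  apply List.map_congr_left
  intro j _
  simp only [Function.comp_apply]
  congr 1
  omega

lemma nu_of_le (r K N : ℕ) (h : N ≤ r) : nu g r K N = 1 := by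
  simp [nu, Nat.sub_eq_zero_of_le h]

lemma nu_peel (r K N : ℕ) (h : r < N) :
    nu g r K N = br g K (r + 1) * nu g (r + 1) (K + 1) N := by
  unfold nu
  obtain ⟨k, hk⟩ : ∃ k, N - r = k + 1 := ⟨N - r - 1, by omega⟩
  have hk2 : N - (r + 1) = k := by omega
  rw [hk, hk2, List.range_succ_eq_map, List.map_cons, List.prod_cons, List.map_map]
  simp only [Nat.add_zero]
  congr 2
  apply List.map_congr_left
  intro j _
  simp only [Function.comp_apply, Nat.succ_eq_add_one]
  congr 1 <;> omega

lemma commute_br {x : M} (a b : ℕ) (hab : a ≤ b)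
    (hx : ∀ i, a ≤ i → i < b → Commute x (g i)) :
    Commute x (br g a b) := by
  unfold br
  rw [if_pos hab]
  apply Commute.list_prod_right
  intro y hy
  simp only [List.mem_reverse, List.mem_map, List.mem_range] at hy
  obtain ⟨j, hj, rfl⟩ := hy
  exact hx _ (Nat.le_add_right a j) (by omega)

lemma commute_nu {x : M} (r K N : ℕ)
    (hx : ∀ j, j < N - r → Commute x (br g (K + j) (r + 1 + j))) :
    Commute x (nu g r K N) := by
  unfold nu
  apply Commute.list_prod_right
  intro y hy
  simp only [List.mem_map, List.mem_range] at hy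
  obtain ⟨j, hj, rfl⟩ := hy
  exact hx j hj

lemma key {n : ℕ} (hg : BraidRels g n) :
    ∀ k t s r : ℕ, 1 ≤ t → t ≤ s → s < r → 1 ≤ k → r + k ≤ n →
      nu g r (s + 1) (r + k) * nu g s t (s + k) = nu g r t (r + k) := by
  intro k
  induction k with
  | zero => intro t s r _ _ _ hk _; omega
  | succ k ih =>
    intro t s r ht hts hsr _ hn
    show nu g r (s + 1) (r + k + 1) * nu g s t (s + k + 1) = nu g r t (r + k + 1)
    by_cases hk : k = 0
    · subst hk
      rw [nu_peel g r (s + 1) (r + 0 + 1) (by omega),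
          nu_peel g s t (s + 0 + 1) (by omega),
          nu_of_le g (r + 1) (s + 1 + 1) (r + 0 + 1) (by omega),
          nu_of_le g (s + 1) (t + 1) (s + 0 + 1) (by omega),
          nu_peel g r t (r + 0 + 1) (by omega),
          nu_of_le g (r + 1) (t + 1) (r + 0 + 1) (by omega),
          mul_one, mul_one, mul_one]
      exact br_concat g t (s + 1) (r + 0 + 1) (by omega) (by omega)
    · have hk1 : 1 ≤ k := by omega
      rw [nu_peel g r (s + 1) (r + k + 1) (by omega),
          nu_peel g s t (s + k + 1) (by omega)]
      have hcomm : Commute (br g t (s + 1)) (nu g (r + 1) (s + 1 + 1) (r + k + 1)) := by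
        apply commute_nu
        intro j hj
        have hjk : j < k := by omega
        apply commute_br g (s + 1 + 1 + j) (r + 1 + 1 + j) (by omega)
        intro i hi1 hi2
        apply Commute.symm
        apply commute_br g t (s + 1) (by omega)
        intro l hl1 hl2
        show g i * g l = g l * g i
        exact (hg.2 l i (by omega) (by omega) (by omega)).symm
      have hih := ih (t + 1) (s + 1) (r + 1) (by omega) (by omega) (by omega) hk1 (by omega)
      rw [show r + 1 + k = r + k + 1 from by omega, show s + 1 + k = s + k + 1 from by omega]
        at hih
      calc br g (s + 1) (r + 1) * nu g (r + 1) (s + 1 + 1) (r + k + 1) *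
            (br g t (s + 1) * nu g (s + 1) (t + 1) (s + k + 1))
          = br g (s + 1) (r + 1) * (nu g (r + 1) (s + 1 + 1) (r + k + 1) * br g t (s + 1)) *
            nu g (s + 1) (t + 1) (s + k + 1) := by
            simp only [mul_assoc]
        _ = br g (s + 1) (r + 1) * (br g t (s + 1) * nu g (r + 1) (s + 1 + 1) (r + k + 1)) *
            nu g (s + 1) (t + 1) (s + k + 1) := by rw [← hcomm.eq]
        _ = (br g (s + 1) (r + 1) * br g t (s + 1)) *
            (nu g (r + 1) (s + 1 + 1) (r + k + 1) * nu g (s + 1) (t + 1) (s + k + 1)) := by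
            simp only [mul_assoc]
        _ = br g t (r + 1) * nu g (r + 1) (t + 1) (r + k + 1) := by
            rw [br_concat g t (s + 1) (r + 1) (by omega) (by omega), hih]
        _ = nu g r t (r + k + 1) := (nu_peel g r t (r + k + 1) (by omega)).symm

end Stmt3Aux

open BraidMonoid in
/-- relations (2.8): in a monoid whose elements `g 1, …, g (n-1)` satisfy the
braid relations: (i) for `1 ≤ t ≤ r < m < n` one has `ν_r^{t,m} ν_m^{m-r+t,n} = ν_r^{t,n}`;
(ii) for `1 ≤ t ≤ s < r < n` one has `ν_r^{s+1,n} ν_s^{t,n-r+s} = ν_r^{t,n}`. -/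
theorem stmt3 {M : Type*} [Monoid M] (n : ℕ) (g : ℕ → M) (hg : BraidRels g n) :
    (∀ t r m : ℕ, 1 ≤ t → t ≤ r → r < m → m < n →
      nu g r t m * nu g m (m - r + t) n = nu g r t n) ∧
    (∀ t s r : ℕ, 1 ≤ t → t ≤ s → s < r → r < n →
      nu g r (s + 1) n * nu g s t (n - r + s) = nu g r t n) := by
  constructor
  · intro t r m ht htr hrm hmn
    unfold nu
    rw [show n - r = (m - r) + (n - m) from by omega, List.range_add, List.map_append,
      List.prod_append]
    congr 1
    rw [List.map_map]
    congr 1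
    apply List.map_congr_left
    intro j _
    simp only [Function.comp_apply]
    congr 1 <;> omega
  · intro t s r ht hts hsr hrn
    have h := Stmt3Aux.key g hg (n - r) t s r ht hts hsr (by omega) (by omega)
    rw [show r + (n - r) = n from by omega, show s + (n - r) = n - r + s from by omega] at h
    exact h
end

section
/- In any monoid containing elements s_1, …, s_{n−1} satisfying the braid relations, for every s-shuffle π ∈ Sh_r^s (with r < n) one has [π] ν_r^{1,n} = ν_r^{1,n} [π]_{(n−r)}. -/
/-!
Conjugation by `ν_r^{1,N} = [1;r+1][2;r+2]⋯[N-r;N]` shifts the generators `g 1, …, g (r-1)` by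
`N - r`: each factor `[j;r+j] = g (r+j-1) ⋯ g j` satisfies `g k [j;r+j] = [j;r+j] g (k+1)` for
`j ≤ k < r+j-1`, by one braid relation and commutations. Since `[π]` is a word in
`g 1, …, g (r-1)`, conjugating it by `ν_r^{1,n}` gives the shifted word `[π]_{(n-r)}`.
-/

namespace BraidMonoid

variable {M : Type*} [Monoid M] {g : ℕ → M} {n : ℕ}

theorem BraidRels.commute (hg : BraidRels g n) {i j : ℕ} (hi : 1 ≤ i) (hij : i + 1 < j)
    (hj : j < n) : Commute (g i) (g j) :=
  hg.2 i j hi (by omega) hij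

theorem BraidRels.semiconjBy (hg : BraidRels g n) {i : ℕ} (hi : 1 ≤ i) (hin : i + 2 ≤ n) :
    SemiconjBy (g (i + 1) * g i) (g (i + 1)) (g i) := by
  simp only [SemiconjBy, ← mul_assoc]
  exact (hg.1 i hi (by omega)).symm

theorem semiconjBy_list_prod_map {c : M} {ι : Type*} {x y : ι → M} (l : List ι)
    (h : ∀ i ∈ l, SemiconjBy c (x i) (y i)) :
    SemiconjBy c (l.map x).prod (l.map y).prod := by
  induction l with
  | nil => exact SemiconjBy.one_right c
  | cons i l ih =>
    simp only [List.map_cons, List.prod_cons]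
    exact (h i List.mem_cons_self).mul_right (ih fun j hj => h j (List.mem_cons_of_mem i hj))

theorem br_semiconjBy {c : M} {g h : ℕ → M} {a b : ℕ}
    (hgh : ∀ x, min a b ≤ x → x < max a b → SemiconjBy c (h x) (g x)) :
    SemiconjBy c (br h a b) (br g a b) := by
  unfold br
  split_ifs with hab
  · rw [← List.map_reverse, ← List.map_reverse]
    exact semiconjBy_list_prod_map _ fun j hj => hgh _ (by omega)
      (by rw [List.mem_reverse, List.mem_range] at hj; omega)
  · exact semiconjBy_list_prod_map _ fun j hj => hgh _ (by omega)
      (by rw [List.mem_range] at hj; omega)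

theorem br_succ (g : ℕ → M) {a b : ℕ} (h : a ≤ b) : br g a (b + 1) = g b * br g a b := by
  simp only [br, if_pos h, if_pos (h.trans b.le_succ), Nat.succ_sub h, List.range_succ]
  simp [Nat.add_sub_cancel' h]

theorem BraidRels.commute_br (hg : BraidRels g n) {a b m : ℕ} (ha : 1 ≤ a) (hab : a ≤ b)
    (hbm : b < m) (hm : m < n) : Commute (g m) (br g a b) :=
  br_semiconjBy fun _ hx hx' => (hg.commute (by omega) (by omega) hm).symm

theorem BraidRels.semiconjBy_br (hg : BraidRels g n) {a b k : ℕ} (ha : 1 ≤ a) (hak : a ≤ k)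
    (hkb : k + 1 < b) (hb : b ≤ n) : SemiconjBy (br g a b) (g (k + 1)) (g k) := by
  induction b, hkb using Nat.le_induction with
  | base =>
    rw [br_succ g (by omega : a ≤ k + 1), br_succ g hak, ← mul_assoc]
    exact (hg.semiconjBy (by omega) hb).mul_left (hg.commute_br ha hak (by omega) (by omega)).symm
  | succ b hkb ih =>
    rw [br_succ g (by omega)]
    exact SemiconjBy.mul_left (hg.commute (by omega) hkb (by omega)).symm (ih (by omega))

theorem nu_succ (g : ℕ → M) {r K N : ℕ} (h : r ≤ N) :
    nu g r K (N + 1) = nu g r K N * br g (K + (N - r)) (N + 1) := by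
  simp only [nu, Nat.succ_sub h, List.range_succ, List.map_append, List.prod_append,
    List.map_singleton, List.prod_singleton]
  congr 2
  omega

theorem nu_one_self (g : ℕ → M) (r K : ℕ) : nu g r K r = 1 := by
  simp [nu]

theorem BraidRels.semiconjBy_nu (hg : BraidRels g n) {r k N : ℕ} (hk : 1 ≤ k) (hkr : k < r)
    (hrN : r ≤ N) (hN : N ≤ n) : SemiconjBy (nu g r 1 N) (g (N - r + k)) (g k) := by
  induction N, hrN using Nat.le_induction with
  | base => simp [nu_one_self, SemiconjBy.one_left]
  | succ N hrN ih =>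
    rw [nu_succ g hrN, show N + 1 - r + k = N - r + k + 1 by omega]
    exact (ih (by omega)).mul_left (hg.semiconjBy_br (by omega) (by omega) (by omega) hN)

theorem br_add (g : ℕ → M) (t a b : ℕ) :
    br g (t + a) (t + b) = br (fun x => g (t + x)) a b := by
  simp only [br, Nat.add_le_add_iff_left, Nat.add_sub_add_left, add_assoc]

theorem brShuffleShift_eq_brShuffle (g : ℕ → M) (t N r : ℕ) (π : Equiv.Perm (Fin N)) :
    brShuffleShift g t N r π = brShuffle (fun x => g (t + x)) N r π := by
  simp only [brShuffle, brShuffleShift, zero_add, add_assoc, br_add]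

theorem brShuffle_semiconjBy {c : M} {g h : ℕ → M} {N s : ℕ} (π : Equiv.Perm (Fin N))
    (hgh : ∀ x, 1 ≤ x → x < N → SemiconjBy c (h x) (g x)) :
    SemiconjBy c (brShuffle h N s π) (brShuffle g N s π) :=
  semiconjBy_list_prod_map _ fun i _ => br_semiconjBy fun x hx hx' =>
    hgh x (by omega) (by have := i.isLt; have := (π i).isLt; omega)

end BraidMonoid

open BraidMonoid in
theorem stmt4_general {M : Type*} [Monoid M] (n : ℕ) (g : ℕ → M) (hg : BraidRels g n)
    (r s : ℕ) (hr : r < n) (π : Equiv.Perm (Fin r)) :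
    brShuffle g r s π * nu g r 1 n = nu g r 1 n * brShuffleShift g (n - r) r s π := by
  rw [brShuffleShift_eq_brShuffle]
  exact (brShuffle_semiconjBy π fun x hx hxr =>
    hg.semiconjBy_nu hx hxr hr.le le_rfl).eq.symm

open BraidMonoid in
/-- Lemma 2.1: in a monoid whose elements `g 1, …, g (n-1)` satisfy the braid
relations, for every `s`-shuffle `π ∈ Sh_r^s` with `r < n` one has
`[π] ν_r^{1,n} = ν_r^{1,n} [π]_{(n-r)}`. -/
theorem stmt4 {M : Type*} [Monoid M] (n : ℕ) (g : ℕ → M) (hg : BraidRels g n)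
    (r s : ℕ) (hs : s ≤ r) (hr : r < n) (π : Equiv.Perm (Fin r)) (hπ : IsShuffle r s π) :
    brShuffle g r s π * nu g r 1 n = nu g r 1 n * brShuffleShift g (n - r) r s π :=
  stmt4_general n g hg r s hr π
end

section
/- In any monoid containing elements s_1, …, s_{N−1} satisfying the braid relations (with N ≥ s+t), for every σ ∈ Sh_s^r and δ ∈ Sh_t^p one has [σ] [δ]_{(s)} ν_s^{r+1,p+s} = [σ*δ], where ν_s^{r+1,p+s} = [r+1;s+1][r+2;s+2]⋯[r+p;s+p] (equal to 1 when r = s, using the convention [j;j] = 1). -/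
namespace BraidMonoid
variable {M : Type*} [Monoid M]

lemma br_of_le (g : ℕ → M) {a b : ℕ} (h : a ≤ b) :
    br g a b = (((List.range (b - a)).map (fun j => g (a + j))).reverse).prod := by
  unfold br; rw [if_pos h]

lemma br_split (g : ℕ → M) {a b c : ℕ} (hab : a ≤ b) (hbc : b ≤ c) :
    br g b c * br g a b = br g a c := by
  rw [br_of_le g hab, br_of_le g hbc, br_of_le g (hab.trans hbc)]
  have h : c - a = (b - a) + (c - b) := by omega
  rw [h, List.range_add, List.map_append, List.reverse_append, List.prod_append]
  congr 2
  rw [List.map_map]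
  congr 1
  apply List.map_congr_left
  intro x _
  simp only [Function.comp_apply]
  congr 1
  omega

lemma commute_g_br {N : ℕ} {g : ℕ → M} (hg : BraidRels g N) {i c d : ℕ}
    (hi : 1 ≤ i) (hic : i + 1 < c) (hcd : c ≤ d) (hd : d ≤ N) :
    Commute (g i) (br g c d) := by
  rw [br_of_le g hcd]
  apply Commute.list_prod_right
  intro x hx
  rw [List.mem_reverse, List.mem_map] at hx
  obtain ⟨j, hj, rfl⟩ := hx
  rw [List.mem_range] at hj
  exact hg.2 i (c + j) hi (by omega) (by omega)

lemma commute_br_br {N : ℕ} {g : ℕ → M} (hg : BraidRels g N) {a b c d : ℕ}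
    (ha : 1 ≤ a) (hab : a ≤ b) (hbc : b < c) (hcd : c ≤ d) (hd : d ≤ N) :
    Commute (br g a b) (br g c d) := by
  rw [br_of_le g hab]
  apply Commute.list_prod_left
  intro x hx
  rw [List.mem_reverse, List.mem_map] at hx
  obtain ⟨j, hj, rfl⟩ := hx
  rw [List.mem_range] at hj
  exact commute_g_br hg (by omega) (by omega) hcd hd

lemma prod_mul_prod_of_commute (D V : ℕ → M) :
    ∀ q, (∀ j k, j < k → k < q → Commute (V j) (D k)) →
    ((List.range q).map D).prod * ((List.range q).map V).prod
      = ((List.range q).map (fun k => D k * V k)).prod := by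
  intro q
  induction q with
  | zero => simp
  | succ q ih =>
    intro h
    rw [List.range_succ]
    simp only [List.map_append, List.prod_append, List.map_cons, List.map_nil,
      List.prod_cons, List.prod_nil, mul_one]
    have hc : Commute ((List.range q).map V).prod (D q) := by
      apply Commute.list_prod_left
      intro x hx
      obtain ⟨j, hj, rfl⟩ := List.mem_map.mp hx
      exact h j q (List.mem_range.mp hj) (Nat.lt_succ_self q)
    rw [← ih (fun j k hjk hk => h j k hjk (hk.trans (Nat.lt_succ_self q)))]
    simp only [mul_assoc]
    rw [← mul_assoc (D q), ← hc.eq, mul_assoc]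

omit [Monoid M] in
lemma take_finRange_map {n : ℕ} (r : ℕ) (hr : r ≤ n) (f : Fin n → M) (F : ℕ → M)
    (hF : ∀ (i : ℕ) (h : i < n), i < r → F i = f ⟨i, h⟩) :
    ((List.finRange n).take r).map f = (List.range r).map F := by
  apply List.ext_getElem
  · simp [hr]
  · intro i h1 h2
    have hin : i < n := by
      simp only [List.length_map, List.length_take, List.length_finRange] at h1
      omega
    have hir : i < r := by
      simp only [List.length_map, List.length_range] at h2
      exact h2
    simp only [List.getElem_map, List.getElem_take, List.getElem_finRange,
      List.getElem_range]
    rw [hF i hin hir]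
    congr 1

end BraidMonoid

open BraidMonoid in
/-- Lemma 2.2: in a monoid whose elements `g 1, …, g (N-1)` satisfy the braid
relations (`N ≥ s + t`), for every `σ ∈ Sh_s^r` and `δ ∈ Sh_t^p` one has
`[σ] [δ]_{(s)} ν_s^{r+1,p+s} = [σ*δ]`, where `σ*δ ∈ Sh_{s+t}^{r+p}` is the unique
`(r+p)`-shuffle with `(σ*δ)(i) = σ(i)` for `i ≤ r` and `(σ*δ)(r+i) = s + δ(i)` for `i ≤ p`
(here `ρ` denotes `σ*δ`, characterized by these value conditions). -/
theorem stmt5 {M : Type*} [Monoid M] (N s t r p : ℕ) (g : ℕ → M) (hg : BraidRels g N)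
    (hN : s + t ≤ N) (hr : r ≤ s) (hp : p ≤ t)
    (σ : Equiv.Perm (Fin s)) (hσ : IsShuffle s r σ)
    (δ : Equiv.Perm (Fin t)) (hδ : IsShuffle t p δ)
    (ρ : Equiv.Perm (Fin (s + t))) (hρ : IsShuffle (s + t) (r + p) ρ)
    (hρ1 : ∀ i : Fin s, (i : ℕ) < r →
      ρ (Fin.castLE (Nat.le_add_right s t) i) = Fin.castLE (Nat.le_add_right s t) (σ i))
    (hρ2 : ∀ i : Fin t, (i : ℕ) < p → ∀ h : r + (i : ℕ) < s + t,
      ((ρ ⟨r + (i : ℕ), h⟩ : Fin (s + t)) : ℕ) = s + (δ i : ℕ)) :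
    brShuffle g s r σ * brShuffleShift g s t p δ * nu g s (r + 1) (p + s)
      = brShuffle g (s + t) (r + p) ρ := by
  classical
  -- δ(k) ≥ k for k < p
  have hδk : ∀ k : ℕ, ∀ hk : k < t, k < p → k ≤ (δ ⟨k, hk⟩ : ℕ) := by
    intro k
    induction k with
    | zero => intro _ _; exact Nat.zero_le _
    | succ k ih =>
      intro hk hkp
      have hk' : k < t := by omega
      have hkp' : k < p := by omega
      have hlt : δ ⟨k, hk'⟩ < δ ⟨k + 1, hk⟩ :=
        hδ.1 ⟨k, hk'⟩ ⟨k + 1, hk⟩ (by simp [Fin.lt_def]) (by simpa using hkp)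
      have h1 := ih hk' hkp'
      have h2 := Fin.lt_def.mp hlt
      omega
  set A : ℕ → M := fun i =>
    br g (i + 1) ((if h : i < s then ((σ ⟨i, h⟩ : Fin s) : ℕ) else 0) + 1) with hA
  set D : ℕ → M := fun k =>
    br g (s + k + 1) (s + (if h : k < t then ((δ ⟨k, h⟩ : Fin t) : ℕ) else 0) + 1) with hD
  set V : ℕ → M := fun j => br g (r + 1 + j) (s + 1 + j) with hV
  set E : ℕ → M := fun k =>
    br g (r + k + 1) (s + (if h : k < t then ((δ ⟨k, h⟩ : Fin t) : ℕ) else 0) + 1) with hE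
  set C : ℕ → M := fun i =>
    br g (i + 1) ((if h : i < s + t then ((ρ ⟨i, h⟩ : Fin (s + t)) : ℕ) else 0) + 1) with hC
  have e1 : brShuffle g s r σ = ((List.range r).map A).prod := by
    unfold brShuffle brShuffleShift
    refine congrArg List.prod (take_finRange_map r hr _ _ ?_)
    intro i h hir
    rw [hA]
    simp only [dif_pos h]
    norm_num
  have e2 : brShuffleShift g s t p δ = ((List.range p).map D).prod := by
    unfold brShuffleShift
    refine congrArg List.prod (take_finRange_map p hp _ _ ?_)
    intro k h hkp
    rw [hD]
    simp only [dif_pos h]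
  have e3 : nu g s (r + 1) (p + s) = ((List.range p).map V).prod := by
    unfold nu
    rw [show p + s - s = p by omega]
  have e4 : brShuffle g (s + t) (r + p) ρ = ((List.range (r + p)).map C).prod := by
    unfold brShuffle brShuffleShift
    refine congrArg List.prod (take_finRange_map (r + p) (by omega) _ _ ?_)
    intro i h hir
    rw [hC]
    simp only [dif_pos h]
    norm_num
  have e5 : ((List.range (r + p)).map C).prod
      = ((List.range r).map C).prod * ((List.range p).map (fun k => C (r + k))).prod := by
    rw [List.range_add, List.map_append, List.prod_append, List.map_map]
    rfl
  have e6 : (List.range r).map C = (List.range r).map A := by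
    apply List.map_congr_left
    intro i hi
    rw [List.mem_range] at hi
    have his : i < s := by omega
    have hist : i < s + t := by omega
    rw [hA, hC]
    simp only [dif_pos his, dif_pos hist]
    have h1 : ρ ⟨i, hist⟩ = Fin.castLE (Nat.le_add_right s t) (σ ⟨i, his⟩) :=
      hρ1 ⟨i, his⟩ hi
    rw [h1, Fin.coe_castLE]
  have e7 : (List.range p).map (fun k => C (r + k)) = (List.range p).map E := by
    apply List.map_congr_left
    intro k hk
    rw [List.mem_range] at hk
    have hkt : k < t := by omega
    have hrk : r + k < s + t := by omega
    rw [hE, hC]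
    simp only [dif_pos hkt, dif_pos hrk]
    have h1 := hρ2 ⟨k, hkt⟩ hk hrk
    simp only at h1
    rw [h1, show r + k + 1 = r + k + 1 from rfl]
  have core : ((List.range p).map D).prod * ((List.range p).map V).prod
      = ((List.range p).map E).prod := by
    rw [prod_mul_prod_of_commute D V p]
    · apply congrArg List.prod
      apply List.map_congr_left
      intro k hk
      rw [List.mem_range] at hk
      have hkt : k < t := by omega
      rw [hD, hV, hE]
      simp only [dif_pos hkt]
      have hv : br g (r + 1 + k) (s + 1 + k) = br g (r + k + 1) (s + k + 1) := by
        rw [show r + 1 + k = r + k + 1 by omega, show s + 1 + k = s + k + 1 by omega]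
      rw [hv]
      exact br_split g (by omega) (by have := hδk k hkt hk; omega)
    · intro j k hjk hkp
      have hkt : k < t := by omega
      rw [hD, hV]
      simp only [dif_pos hkt]
      have hdlt : (δ ⟨k, hkt⟩ : ℕ) < t := (δ ⟨k, hkt⟩).isLt
      exact commute_br_br hg (by omega) (by omega) (by omega)
        (by have := hδk k hkt hkp; omega) (by omega)
  rw [e1, e2, e3, e4, e5, e6, e7, mul_assoc, core]
end

section
/- Let n = s + t and 0 ≤ q ≤ n. Then every q-shuffle π ∈ Sh_n^q can be written uniquely in the form π = σ*δ, where r + p = q, σ ∈ Sh_s^r, and δ ∈ Sh_t^p; explicitly, r is the greatest integer with r ≤ q and π(r) ≤ s, σ(i) = π(i) for 1 ≤ i ≤ r, p = q − r, and δ(i) = π(r+i) − s for 1 ≤ i ≤ p. -/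
namespace BraidMonoid

/-- `ShuffleDecomp s t q π r p σ δ` says that the `q`-shuffle `π ∈ Sh_{s+t}^q` decomposes as
`π = σ*δ` with `σ ∈ Sh_s^r`, `δ ∈ Sh_t^p`, `r + p = q`: the first `r` values of `π` are the
first `r` values of `σ`, and the next `p` values of `π` are `s` plus the first `p` values
of `δ`. -/
def ShuffleDecomp (s t q : ℕ) (π : Equiv.Perm (Fin (s + t)))
    (r p : ℕ) (σ : Equiv.Perm (Fin s)) (δ : Equiv.Perm (Fin t)) : Prop :=
  r + p = q ∧ r ≤ s ∧ p ≤ t ∧ IsShuffle s r σ ∧ IsShuffle t p δ ∧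
  (∀ i : Fin s, (i : ℕ) < r →
    π (Fin.castLE (Nat.le_add_right s t) i) = Fin.castLE (Nat.le_add_right s t) (σ i)) ∧
  (∀ i : Fin t, (i : ℕ) < p → ∀ h : r + (i : ℕ) < s + t,
    ((π ⟨r + (i : ℕ), h⟩ : Fin (s + t)) : ℕ) = s + (δ i : ℕ))

lemma strictMono_eq_of_image_eq {α : Type*} [LinearOrder α] [DecidableEq α] {k : ℕ} {f g : Fin k → α}
    (hf : StrictMono f) (hg : StrictMono g)
    (h : Finset.image f Finset.univ = Finset.image g Finset.univ) : f = g := by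
  have hcard : (Finset.image f Finset.univ).card = k := by
    rw [Finset.card_image_of_injective _ hf.injective, Finset.card_univ, Fintype.card_fin]
  have h1 := Finset.orderEmbOfFin_unique hcard
      (fun x => Finset.mem_image_of_mem _ (Finset.mem_univ x)) hf
  have h2 := Finset.orderEmbOfFin_unique hcard
      (fun x => h ▸ Finset.mem_image_of_mem _ (Finset.mem_univ x)) hg
  exact h1.trans h2.symm

lemma exists_shuffle {s r : ℕ} (hr : r ≤ s) (g : Fin r → Fin s) (hg : StrictMono g) :
    ∃ σ : Equiv.Perm (Fin s), IsShuffle s r σ ∧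
      ∀ (i : Fin s) (h : (i : ℕ) < r), σ i = g ⟨i, h⟩ := by
  classical
  set A : Finset (Fin s) := Finset.image g Finset.univ with hA
  have hAcard : A.card = r := by
    rw [hA, Finset.card_image_of_injective _ hg.injective, Finset.card_univ, Fintype.card_fin]
  have hBcard : Aᶜ.card = s - r := by
    rw [Finset.card_compl, hAcard, Fintype.card_fin]
  set e2 := Aᶜ.orderEmbOfFin hBcard with he2
  set F : Fin s → Fin s := fun i =>
    if h : (i : ℕ) < r then g ⟨i, h⟩ else e2 ⟨(i : ℕ) - r, by have := i.isLt; omega⟩ with hF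
  have hinj : Function.Injective F := by
    intro i j hij
    by_cases hi : (i : ℕ) < r <;> by_cases hj : (j : ℕ) < r <;>
      simp only [hF, hi, hj, dif_pos, dif_neg, not_false_iff] at hij
    · have h2 := congrArg Fin.val (hg.injective hij)
      exact Fin.ext h2
    · have h1 : g ⟨i, hi⟩ ∈ A := Finset.mem_image_of_mem _ (Finset.mem_univ _)
      have h2 := Aᶜ.orderEmbOfFin_mem hBcard ⟨(j : ℕ) - r, by have := j.isLt; omega⟩
      rw [hij] at h1
      exact absurd h1 (Finset.mem_compl.mp h2)
    · have h1 : g ⟨j, hj⟩ ∈ A := Finset.mem_image_of_mem _ (Finset.mem_univ _)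
      have h2 := Aᶜ.orderEmbOfFin_mem hBcard ⟨(i : ℕ) - r, by have := i.isLt; omega⟩
      rw [← hij] at h1
      exact absurd h1 (Finset.mem_compl.mp h2)
    · have := congrArg Fin.val (e2.injective hij)
      simp only at this
      exact Fin.ext (by omega)
  refine ⟨Equiv.ofBijective F (Finite.injective_iff_bijective.mp hinj), ⟨?_, ?_⟩, ?_⟩
  · intro i j hij hjr
    have hir : (i : ℕ) < r := lt_trans hij hjr
    show F i < F j
    simp only [hF, dif_pos hir, dif_pos hjr]
    exact hg hij
  · intro i j hij hri
    have hrj : r ≤ (j : ℕ) := le_trans hri (le_of_lt hij)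
    show F i < F j
    simp only [hF, dif_neg (not_lt.mpr hri), dif_neg (not_lt.mpr hrj)]
    exact e2.strictMono (by simp only [Fin.mk_lt_mk]; omega)
  · intro i h
    show F i = g ⟨i, h⟩
    simp only [hF, dif_pos h]

lemma shuffle_ext {s r : ℕ} (hr : r ≤ s) {σ σ' : Equiv.Perm (Fin s)}
    (hσ : IsShuffle s r σ) (hσ' : IsShuffle s r σ')
    (h : ∀ i : Fin s, (i : ℕ) < r → σ i = σ' i) : σ = σ' := by
  set g : Fin r → Fin s := fun i => σ ⟨i, lt_of_lt_of_le i.isLt hr⟩ with hg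
  have hgmono : StrictMono g := fun i j hij =>
    hσ.1 _ _ (Fin.mk_lt_mk.mpr hij) j.isLt
  set τ : Fin (s - r) → Fin s := fun j => σ ⟨r + j, by have := j.isLt; omega⟩ with hτ
  have hτmono : StrictMono τ := fun i j hij =>
    hσ.2 _ _ (Fin.mk_lt_mk.mpr (Nat.add_lt_add_left hij r)) (by simp)
  set τ' : Fin (s - r) → Fin s := fun j => σ' ⟨r + j, by have := j.isLt; omega⟩ with hτ'
  have hτ'mono : StrictMono τ' := fun i j hij =>
    hσ'.2 _ _ (Fin.mk_lt_mk.mpr (Nat.add_lt_add_left hij r)) (by simp)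
  have himg : ∀ (π : Equiv.Perm (Fin s)), IsShuffle s r π →
      (∀ i : Fin r, π ⟨i, lt_of_lt_of_le i.isLt hr⟩ = g i) →
      Finset.image (fun j : Fin (s - r) => π ⟨r + j, by have := j.isLt; omega⟩) Finset.univ
        = (Finset.image g Finset.univ)ᶜ := by
    intro π hπsh hπg
    apply Finset.eq_of_subset_of_card_le
    · intro x hx
      simp only [Finset.mem_image, Finset.mem_univ, true_and] at hx
      obtain ⟨j, rfl⟩ := hx
      rw [Finset.mem_compl]
      simp only [Finset.mem_image, Finset.mem_univ, true_and]
      rintro ⟨i, hi⟩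
      rw [← hπg i] at hi
      have := congrArg Fin.val (π.injective hi)
      simp only at this
      omega
    · rw [Finset.card_compl, Fintype.card_fin,
        Finset.card_image_of_injective _ hgmono.injective,
        Finset.card_image_of_injective _ ]
      · simp
      · intro i j hij
        have := congrArg Fin.val (π.injective hij)
        simp only at this
        exact Fin.ext (by omega)
  have hττ' : τ = τ' := by
    apply strictMono_eq_of_image_eq hτmono hτ'mono
    exact (himg σ hσ fun i => rfl).trans (himg σ' hσ' fun i => (h _ i.isLt).symm).symm
  apply Equiv.ext
  intro i
  by_cases hi : (i : ℕ) < r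
  · exact h i hi
  · have hieq : i = ⟨r + ((i : ℕ) - r), by have := i.isLt; omega⟩ :=
      Fin.ext (by simp; omega)
    rw [hieq]
    exact congrFun hττ' ⟨(i : ℕ) - r, by have := i.isLt; omega⟩

lemma mem_iff_lt_card_of_down {n : ℕ} (S : Finset (Fin n))
    (hS : ∀ i j : Fin n, i ≤ j → j ∈ S → i ∈ S) (j : Fin n) :
    j ∈ S ↔ (j : ℕ) < S.card := by
  constructor
  · intro hj
    have hsub : Finset.Iic j ⊆ S := fun i hi => hS i j (Finset.mem_Iic.mp hi) hj
    have := Finset.card_le_card hsub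
    rw [Fin.card_Iic] at this
    omega
  · intro hj
    by_contra hjS
    have hsub : S ⊆ Finset.Iio j := by
      intro k hk
      rw [Finset.mem_Iio]
      by_contra hjk
      exact hjS (hS j k (not_lt.mp hjk) hk)
    have := Finset.card_le_card hsub
    rw [Fin.card_Iio] at this
    omega

lemma card_filter_lt {q m : ℕ} (hm : m ≤ q) :
    (Finset.univ.filter fun j : Fin q => (j : ℕ) < m).card = m := by
  have : (Finset.univ.filter fun j : Fin q => (j : ℕ) < m) =
      Finset.map (Fin.castLEEmb hm) Finset.univ := by
    ext j
    simp only [Finset.mem_filter, Finset.mem_univ, true_and, Finset.mem_map]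
    constructor
    · intro hj
      refine ⟨⟨j, hj⟩, ?_⟩
      exact Fin.ext rfl
    · rintro ⟨a, -, rfl⟩
      exact a.isLt

  rw [this, Finset.card_map, Finset.card_univ, Fintype.card_fin]

end BraidMonoid

open BraidMonoid in
/-- for `n = s + t` and `0 ≤ q ≤ n`, every `q`-shuffle `π ∈ Sh_n^q` can be
written uniquely as `π = σ*δ` with `r + p = q`, `σ ∈ Sh_s^r` and `δ ∈ Sh_t^p`. -/
theorem stmt6 (s t q : ℕ) (hq : q ≤ s + t)
    (π : Equiv.Perm (Fin (s + t))) (hπ : IsShuffle (s + t) q π) :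
    ∃! x : ℕ × ℕ × Equiv.Perm (Fin s) × Equiv.Perm (Fin t),
      ShuffleDecomp s t q π x.1 x.2.1 x.2.2.1 x.2.2.2 := by
  classical
  obtain ⟨hπ1, hπ2⟩ := hπ
  set S : Finset (Fin q) :=
    Finset.univ.filter (fun j : Fin q => ((π (Fin.castLE hq j) : Fin (s + t)) : ℕ) < s) with hSdef
  set r := S.card with hrdef
  have hrq : r ≤ q := by
    have h := Finset.card_le_univ S
    rw [Fintype.card_fin] at h
    exact h
  have hdown : ∀ a b : Fin q, a ≤ b → b ∈ S → a ∈ S := by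
    intro a b hab hb
    simp only [hSdef, Finset.mem_filter, Finset.mem_univ, true_and] at hb ⊢
    rcases eq_or_lt_of_le hab with h | h
    · rw [h]; exact hb
    · have h2 : ((π (Fin.castLE hq a)) : ℕ) < ((π (Fin.castLE hq b)) : ℕ) :=
        hπ1 (Fin.castLE hq a) (Fin.castLE hq b) h b.isLt
      omega
  have hmem : ∀ j : Fin (s + t), ∀ hj : (j : ℕ) < q, (((π j) : ℕ) < s ↔ (j : ℕ) < r) := by
    intro j hj
    have h := mem_iff_lt_card_of_down S hdown ⟨(j : ℕ), hj⟩
    rw [← hrdef] at h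
    simp only [hSdef, Finset.mem_filter, Finset.mem_univ, true_and] at h
    rw [show Fin.castLE hq ⟨(j : ℕ), hj⟩ = j from Fin.ext rfl] at h
    exact h
  have hge : ∀ j : Fin (s + t), (j : ℕ) < q → r ≤ (j : ℕ) → s ≤ ((π j) : ℕ) := by
    intro j hjq hjr
    by_contra hc
    push_neg at hc
    exact absurd ((hmem j hjq).mp hc) (not_lt.mpr hjr)
  set p := q - r with hpdef
  have hrpq : r + p = q := by omega
  -- the head of σ
  have hg0ex : ∃ g0 : Fin r → Fin s, StrictMono g0 ∧
      ∀ (i : Fin r) (hpos : (i : ℕ) < s + t), ((π ⟨(i : ℕ), hpos⟩) : ℕ) = (g0 i : ℕ) := by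
    have hq' : ∀ i : Fin r, (i : ℕ) < q := fun i => lt_of_lt_of_le i.isLt hrq
    have hpos : ∀ i : Fin r, (i : ℕ) < s + t := fun i => lt_of_lt_of_le (hq' i) hq
    refine ⟨fun i => ⟨((π ⟨(i : ℕ), hpos i⟩) : ℕ), (hmem _ (hq' i)).mpr i.isLt⟩, ?_, ?_⟩
    · intro i j hij
      have hij' : (i : ℕ) < (j : ℕ) := hij
      have hlt : π ⟨(i : ℕ), hpos i⟩ < π ⟨(j : ℕ), hpos j⟩ :=
        hπ1 _ _ (Fin.mk_lt_mk.mpr hij') (hq' j)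
      exact hlt
    · intro i hpos'
      rfl
  obtain ⟨g0, hg0, hg0val⟩ := hg0ex
  have hrs : r ≤ s := by
    have h := Fintype.card_le_of_injective g0 hg0.injective
    simpa using h
  -- the head of δ
  have hh0ex : ∃ h0 : Fin p → Fin t, StrictMono h0 ∧
      ∀ (i : Fin p) (hpos : r + (i : ℕ) < s + t),
        ((π ⟨r + (i : ℕ), hpos⟩) : ℕ) = s + (h0 i : ℕ) := by
    have hq' : ∀ i : Fin p, r + (i : ℕ) < q := fun i => by have := i.isLt; omega
    have hpos : ∀ i : Fin p, r + (i : ℕ) < s + t := fun i => lt_of_lt_of_le (hq' i) hq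
    have hs' : ∀ i : Fin p, s ≤ ((π ⟨r + (i : ℕ), hpos i⟩) : ℕ) := fun i =>
      hge _ (hq' i) (Nat.le_add_right r _)
    have hub : ∀ i : Fin p, ((π ⟨r + (i : ℕ), hpos i⟩) : ℕ) < s + t := fun i => (π _).isLt
    refine ⟨fun i => ⟨((π ⟨r + (i : ℕ), hpos i⟩) : ℕ) - s, by
      have := hs' i; have := hub i; omega⟩, ?_, ?_⟩
    · intro i j hij
      have hij' : (i : ℕ) < (j : ℕ) := hij
      have hlt : ((π ⟨r + (i : ℕ), hpos i⟩) : ℕ) < ((π ⟨r + (j : ℕ), hpos j⟩) : ℕ) :=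
        hπ1 _ _ (Fin.mk_lt_mk.mpr (by omega)) (hq' j)
      have := hs' i
      show ((π ⟨r + (i : ℕ), hpos i⟩) : ℕ) - s < ((π ⟨r + (j : ℕ), hpos j⟩) : ℕ) - s
      omega
    · intro i hpos'
      have := hs' i
      show ((π ⟨r + (i : ℕ), hpos'⟩) : ℕ) = s + (((π ⟨r + (i : ℕ), hpos i⟩) : ℕ) - s)
      have heq : ((π ⟨r + (i : ℕ), hpos'⟩) : ℕ) = ((π ⟨r + (i : ℕ), hpos i⟩) : ℕ) := rfl
      omega
  obtain ⟨h0, hh0, hh0val⟩ := hh0ex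
  have hpt : p ≤ t := by
    have h := Fintype.card_le_of_injective h0 hh0.injective
    simpa using h
  obtain ⟨σ, hσsh, hσval⟩ := exists_shuffle hrs g0 hg0
  obtain ⟨δ, hδsh, hδval⟩ := exists_shuffle hpt h0 hh0
  have hconda : ∀ i : Fin s, (i : ℕ) < r →
      π (Fin.castLE (Nat.le_add_right s t) i) = Fin.castLE (Nat.le_add_right s t) (σ i) := by
    intro i hi
    rw [hσval i hi]
    apply Fin.ext
    have h1 := hg0val ⟨(i : ℕ), hi⟩ (lt_of_lt_of_le i.isLt (Nat.le_add_right s t))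
    have harg : Fin.castLE (Nat.le_add_right s t) i
        = (⟨(i : ℕ), lt_of_lt_of_le i.isLt (Nat.le_add_right s t)⟩ : Fin (s + t)) := Fin.ext rfl
    rw [harg]
    exact h1
  have hcondb : ∀ i : Fin t, (i : ℕ) < p → ∀ h : r + (i : ℕ) < s + t,
      ((π ⟨r + (i : ℕ), h⟩ : Fin (s + t)) : ℕ) = s + (δ i : ℕ) := by
    intro i hi h
    rw [hδval i hi]
    exact hh0val ⟨(i : ℕ), hi⟩ h
  refine ⟨(r, p, σ, δ), ⟨hrpq, hrs, hpt, hσsh, hδsh, hconda, hcondb⟩, ?_⟩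
  rintro ⟨r', p', σ', δ'⟩ hy
  obtain ⟨hrpq', hr's, hp't, hσ'sh, hδ'sh, hσ'agree, hδ'agree⟩ := hy
  replace hrpq' : r' + p' = q := hrpq'
  replace hr's : r' ≤ s := hr's
  replace hp't : p' ≤ t := hp't
  replace hσ'sh : IsShuffle s r' σ' := hσ'sh
  replace hδ'sh : IsShuffle t p' δ' := hδ'sh
  replace hσ'agree : ∀ i : Fin s, (i : ℕ) < r' →
      π (Fin.castLE (Nat.le_add_right s t) i) = Fin.castLE (Nat.le_add_right s t) (σ' i) :=
    hσ'agree
  replace hδ'agree : ∀ i : Fin t, (i : ℕ) < p' → ∀ h : r' + (i : ℕ) < s + t,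
      ((π ⟨r' + (i : ℕ), h⟩ : Fin (s + t)) : ℕ) = s + (δ' i : ℕ) := hδ'agree
  have hiff : ∀ j : Fin q, ((π (Fin.castLE hq j) : Fin (s + t)) : ℕ) < s ↔ (j : ℕ) < r' := by
    intro j
    constructor
    · intro hjs
      by_contra hge'
      push_neg at hge'
      have hip : (j : ℕ) - r' < p' := by have := j.isLt; omega
      have hpos : r' + ((j : ℕ) - r') < s + t := by have := j.isLt; omega
      have hval : ((π ⟨r' + ((j : ℕ) - r'), hpos⟩ : Fin (s + t)) : ℕ)
          = s + ((δ' ⟨(j : ℕ) - r', lt_of_lt_of_le hip hp't⟩ : Fin t) : ℕ) :=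
        hδ'agree ⟨(j : ℕ) - r', lt_of_lt_of_le hip hp't⟩ hip hpos
      have heq : π (Fin.castLE hq j) = π ⟨r' + ((j : ℕ) - r'), hpos⟩ :=
        congrArg π (Fin.ext (by simp only [Fin.coe_castLE]; omega))
      rw [heq] at hjs
      omega
    · intro hjr'
      have h1 := hσ'agree ⟨(j : ℕ), lt_of_lt_of_le hjr' hr's⟩ hjr'
      have heq : π (Fin.castLE hq j)
          = π (Fin.castLE (Nat.le_add_right s t) ⟨(j : ℕ), lt_of_lt_of_le hjr' hr's⟩) :=
        congrArg π (Fin.ext rfl)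
      rw [heq, h1]
      exact (σ' ⟨(j : ℕ), lt_of_lt_of_le hjr' hr's⟩).isLt
  have hr'q : r' ≤ q := by omega
  have hrr' : r' = r := by
    have hSeq : S = Finset.univ.filter (fun j : Fin q => (j : ℕ) < r') := by
      rw [hSdef]
      ext j
      simp only [Finset.mem_filter, Finset.mem_univ, true_and]
      exact hiff j
    rw [hrdef, hSeq]
    exact (card_filter_lt hr'q).symm
  have hpp' : p' = p := by omega
  subst hrr'
  subst hpp'
  have hσeq : σ' = σ := by
    apply shuffle_ext hrs hσ'sh hσsh
    intro i hi
    have h1 := hσ'agree i hi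
    have h2 := hconda i hi
    rw [h1] at h2
    exact Fin.castLE_injective _ h2
  have hδeq : δ' = δ := by
    apply shuffle_ext hpt hδ'sh hδsh
    intro i hi
    have hpos : r + (i : ℕ) < s + t := by have := i.isLt; omega
    have h1 := hδ'agree i hi hpos
    have h2 := hcondb i hi hpos
    apply Fin.ext
    omega
  rw [hσeq, hδeq]
end
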